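/- Let κ be an infinite cardinal and B a complete Boolean algebra. If the forcing axiom FA_κ(B) fails, then every subset of 2^κ is B-Baire. -/

import Mathlib

open Classical

/-- An ultrafilter on a Boolean algebra `B`, viewed as a subset of `B`:
upward closed, closed under meets, omitting `⊥`, and containing exactly one of
`b`, `bᶜ` for every `b`. -/
def IsUltra {B : Type*} [BooleanAlgebra B] (G : Set B) : Prop :=
  (∀ a b : B, a ∈ G → a ≤ b → b ∈ G) ∧
  (∀ a b : B, a ∈ G → b ∈ G → a ⊓ b ∈ G) ∧
  (⊥ : B) ∉ G ∧
  ∀ b : B, (b ∈ G ∨ bᶜ ∈ G) ∧ ¬(b ∈ G ∧ bᶜ ∈ G)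

/-- The Stone space of a Boolean algebra: the set of its ultrafilters. -/
def StoneSp (B : Type*) [BooleanAlgebra B] : Type _ :=
  {G : Set B // IsUltra G}

/-- The basic (cl)open set `O_b` of the Stone space. -/
def basicOpen {B : Type*} [BooleanAlgebra B] (b : B) : Set (StoneSp B) :=
  {G : StoneSp B | b ∈ G.1}

/-- The Stone topology, generated by the sets `O_b`. -/
instance {B : Type*} [BooleanAlgebra B] : TopologicalSpace (StoneSp B) :=
  TopologicalSpace.generateFrom {S : Set (StoneSp B) | ∃ b : B, S = basicOpen b}

/-- A set is `κ`-meager if it is a union of `κ`-many nowhere dense sets. -/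
def KMeager (κ : Type*) {X : Type*} [TopologicalSpace X] (A : Set X) : Prop :=
  ∃ F : κ → Set X, (∀ i, IsNowhereDense (F i)) ∧ A = ⋃ i, F i

/-- A set has the `κ`-Baire property if it differs from an open set by a
`κ`-meager set. -/
def KBaireProperty (κ : Type*) {X : Type*} [TopologicalSpace X] (A : Set X) : Prop :=
  ∃ U : Set X, IsOpen U ∧ KMeager κ (symmDiff A U)

/-- `D` is a dense subset of the poset `P`. -/
def DenseIn {P : Type*} [Preorder P] (D : Set P) : Prop :=
  ∀ p : P, ∃ d ∈ D, d ≤ p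

/-- The forcing axiom `FA_κ(P)`: every κ-indexed family of dense subsets of `P`
admits a filter meeting all of them. -/
def ForcingAxiom (κ P : Type*) [Preorder P] : Prop :=
  ∀ D : κ → Set P, (∀ i, DenseIn (D i)) →
    ∃ g : Order.PFilter P, ∀ i, ∃ p ∈ g, p ∈ D i

/-!
If `FA_κ(B)` fails, fix dense sets `D_α` (`α < κ`) that no filter meets simultaneously. The open
sets `U_α = ⋃_{d ∈ D_α} O_d` are dense in `St(B)`, and an ultrafilter lying in every `U_α` would be
a filter meeting every `D_α`. Hence `St(B)` is the union of the `κ` nowhere dense sets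
`St(B) ∖ U_α`, so every subset of `St(B)`, in particular every preimage `f⁻¹(A)`, is `κ`-meager
and differs from the open set `∅` by a `κ`-meager set.
-/

open Set TopologicalSpace

section StoneSpace

variable {B : Type*} [BooleanAlgebra B]

theorem IsUltra.top_mem {G : Set B} (hG : IsUltra G) : (⊤ : B) ∈ G :=
  (hG.2.2.2 ⊤).1.resolve_right fun h => hG.2.2.1 (by simpa using h)

theorem IsUltra.ne_bot_of_mem {G : Set B} (hG : IsUltra G) {b : B} (hb : b ∈ G) : b ≠ ⊥ :=
  fun h => hG.2.2.1 (h ▸ hb)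

theorem Order.Ideal.IsPrime.isUltra_compl {J : Order.Ideal B} (hJ : J.IsPrime) :
    IsUltra (J : Set B)ᶜ := by
  refine ⟨fun a b ha hab hb => ha (J.lower hab hb), fun a b ha hb hab => ?_,
    fun h => h J.bot_mem, fun b => ⟨?_, fun ⟨hb, hbc⟩ => hJ.mem_or_compl_mem.elim hb hbc⟩⟩
  · exact (hJ.mem_or_mem hab).elim ha hb
  · by_contra! h
    exact hJ.top_notMem (by simpa using J.sup_mem (not_not.mp h.1) (not_not.mp h.2))

theorem exists_isUltra_mem {b : B} (hb : b ≠ ⊥) : ∃ G : Set B, IsUltra G ∧ b ∈ G := by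
  have hdisj :
      Disjoint (Order.PFilter.principal b : Set B) (Order.Ideal.principal (⊥ : B) : Set B) :=
    Set.disjoint_left.mpr fun x hbx hxbot => hb (le_bot_iff.mp (le_trans hbx hxbot))
  obtain ⟨J, hJ, -, hJb⟩ := DistribLattice.prime_ideal_of_disjoint_filter_ideal hdisj
  exact ⟨_, hJ.isUltra_compl, Set.disjoint_left.mp hJb (Order.PFilter.mem_principal.mpr le_rfl)⟩

theorem basicOpen_inf (a b : B) : basicOpen (a ⊓ b) = basicOpen a ∩ basicOpen b := by
  ext G
  show a ⊓ b ∈ G.1 ↔ a ∈ G.1 ∧ b ∈ G.1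
  exact ⟨fun h => ⟨G.2.1 (a ⊓ b) a h inf_le_left, G.2.1 (a ⊓ b) b h inf_le_right⟩,
    fun h => G.2.2.1 a b h.1 h.2⟩

theorem basicOpen_top : basicOpen (⊤ : B) = univ :=
  eq_univ_of_forall fun G => G.2.top_mem

theorem isTopologicalBasis_basicOpen :
    IsTopologicalBasis {S : Set (StoneSp B) | ∃ b : B, S = basicOpen b} := by
  have hbasis := isTopologicalBasis_of_subbasis_of_inter (t := instTopologicalSpaceStoneSp)
    (r := {S : Set (StoneSp B) | ∃ b : B, S = basicOpen b}) rfl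
    (by rintro _ ⟨a, rfl⟩ _ ⟨b, rfl⟩; exact ⟨a ⊓ b, (basicOpen_inf a b).symm⟩)
  have huniv : univ ∈ {S : Set (StoneSp B) | ∃ b : B, S = basicOpen b} := ⟨⊤, basicOpen_top.symm⟩
  rwa [insert_eq_of_mem huniv] at hbasis

theorem dense_biUnion_basicOpen {D : Set {b : B // b ≠ ⊥}} (hD : DenseIn D) :
    Dense (⋃ d ∈ D, basicOpen d.1) := by
  refine isTopologicalBasis_basicOpen.dense_iff.mpr ?_
  rintro _ ⟨b, rfl⟩ ⟨G, hG⟩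
  obtain ⟨d, hdD, hdb⟩ := hD ⟨b, G.2.ne_bot_of_mem hG⟩
  obtain ⟨H, hH, hdH⟩ := exists_isUltra_mem d.2
  exact ⟨⟨H, hH⟩, hH.1 _ b hdH hdb, mem_biUnion hdD hdH⟩

theorem IsUltra.isPFilter {G : Set B} (hG : IsUltra G) :
    Order.IsPFilter {p : {b : B // b ≠ ⊥} | p.1 ∈ G} := by
  refine Order.IsPFilter.of_def ⟨⟨⊤, hG.ne_bot_of_mem hG.top_mem⟩, hG.top_mem⟩ ?_
    fun {p q} hpq hp => hG.1 p.1 q.1 hp hpq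
  intro p hp q hq
  have hpq : p.1 ⊓ q.1 ∈ G := hG.2.1 _ _ hp hq
  exact ⟨⟨p.1 ⊓ q.1, hG.ne_bot_of_mem hpq⟩, hpq, inf_le_left, inf_le_right⟩

theorem kMeager_univ_of_not_forcingAxiom (κ : Type*)
    (hFA : ¬ ForcingAxiom κ {b : B // b ≠ ⊥}) : KMeager κ (univ : Set (StoneSp B)) := by
  unfold ForcingAxiom at hFA
  push Not at hFA
  obtain ⟨D, hD, hnot⟩ := hFA
  refine ⟨fun i => (⋃ d ∈ D i, basicOpen d.1)ᶜ, fun i => ?_, ?_⟩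
  · refine (isClosed_isNowhereDense_iff_compl.mpr ?_).2
    rw [compl_compl]
    exact ⟨isOpen_biUnion fun d _ => isOpen_generateFrom_of_mem ⟨d.1, rfl⟩,
      dense_biUnion_basicOpen (hD i)⟩
  · refine (eq_univ_of_forall fun G => mem_iUnion.mpr ?_).symm
    obtain ⟨i, hi⟩ := hnot G.2.isPFilter.toPFilter
    exact ⟨i, fun hG => let ⟨d, hdD, hdG⟩ := mem_iUnion₂.mp hG; hi d hdG hdD⟩

end StoneSpace

section Meager

variable {κ X : Type*} [TopologicalSpace X] {s t : Set X}

theorem KMeager.mono (hs : KMeager κ s) (hts : t ⊆ s) : KMeager κ t := by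
  obtain ⟨F, hF, rfl⟩ := hs
  refine ⟨fun i => F i ∩ t, fun i => (hF i).mono inter_subset_left, ?_⟩
  rw [← iUnion_inter, inter_eq_right.mpr hts]

theorem KMeager.kBaireProperty (hs : KMeager κ s) : KBaireProperty κ s :=
  ⟨∅, isOpen_empty, by rwa [← bot_eq_empty, symmDiff_bot]⟩

end Meager

theorem statement12_general {κ B : Type*} [CompleteBooleanAlgebra B]
    (hFA : ¬ ForcingAxiom κ {b : B // b ≠ ⊥}) (A : Set (κ → Bool)) :
    ∀ f : StoneSp B → κ → Bool, Continuous f →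
      KBaireProperty κ (f ⁻¹' A) :=
  fun _ _ => ((kMeager_univ_of_not_forcingAxiom κ hFA).mono (subset_univ _)).kBaireProperty

/-- if `FA_κ(B)` fails then every subset of `2^κ` is `B`-Baire,
i.e. for every continuous `f : St(B) → 2^κ` the preimage `f⁻¹(A)` has the
κ-Baire property. -/
theorem statement12 {κ B : Type*} [Infinite κ] [CompleteBooleanAlgebra B]
    (hFA : ¬ ForcingAxiom κ {b : B // b ≠ ⊥}) (A : Set (κ → Bool)) :
    ∀ f : StoneSp B → κ → Bool, Continuous f →
      KBaireProperty κ (f ⁻¹' A) :=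
  statement12_general hFA A
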